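/- arXiv:2601.20873 — 2 statements merged into one kernel-verified Lean document; each statement's English description precedes it below -/
import Mathlib

section
/- For real α > -1, real y > 0, and natural numbers m, n with n ≤ m, the function I_{m,n}^{(α)}(y) factorizes as I_{m,n}^{(α)}(y) = L_n^{(α)}(-1/y) · I_{m,0}^{(α)}(y). -/
open MeasureTheory Real Set

/-- Generalized Laguerre polynomial `L_n^{(α)}(x)`. -/
noncomputable def genLaguerre (α : ℝ) (n : ℕ) (x : ℝ) : ℝ :=
  ∑ j ∈ Finset.range (n + 1),
    (-1 : ℝ) ^ j * (Real.Gamma (α + n + 1) /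
      (Real.Gamma (α + j + 1) * (Nat.factorial (n - j)))) * x ^ j / (Nat.factorial j)

/-- The function `I_{m,n}^{(α,β)}(y)`. -/
noncomputable def Imn (α β y : ℝ) (m n : ℕ) : ℝ :=
  ∫ ρ in Ioi (0 : ℝ), (1 + y * ρ)⁻¹ * ρ ^ α * Real.exp (-ρ) *
    genLaguerre α m ρ * genLaguerre β n ρ

/-
For `j < m` the identity `ρ^(j+1)/(1+yρ) = (ρ^j - ρ^j/(1+yρ))/y` and the orthogonality of
`L_m^{(α)}` to `ρ^j` give `J_{j+1} = -J_j/y` for the moments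
`J_j = ∫ ρ^j L_m^{(α)}(ρ) ρ^α e^{-ρ}/(1+yρ) dρ`, hence `J_j = (-1/y)^j J_0` for `j ≤ m`.
Integrating any polynomial `P` of degree `≤ m` against `L_m^{(α)}(ρ) ρ^α e^{-ρ}/(1+yρ)` therefore
gives `P(-1/y) J_0`; take `P = L_n^{(α)}` and `P = L_0^{(α)} = 1`.
The orthogonality holds because, by `∫ ρ^(α+N) e^{-ρ} = Γ(α+N+1)`, the moment
`∫ ρ^k L_m^{(α)}(ρ) ρ^α e^{-ρ}` is a multiple of the `m`-th finite difference of the degree-`k`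
polynomial `j ↦ (α+j+1)_k`, which vanishes for `k < m`.
-/

open Polynomial Finset

theorem sum_range_neg_one_pow_mul_choose_mul_eval_eq_zero {R : Type*} [CommRing R]
    {Q : R[X]} {m : ℕ} (hQ : Q.natDegree < m) :
    ∑ j ∈ range (m + 1), (-1 : R) ^ j * m.choose j * Q.eval (j : R) = 0 := by
  have h := congr_fun (fwdDiff_iter_eq_zero_of_degree_lt hQ) 0
  rw [fwdDiff_iter_eq_sum_shift] at h
  calc _ = (-1) ^ m * ∑ j ∈ range (m + 1),
        ((-1 : ℤ) ^ (m - j) * m.choose j) • Q.eval (0 + j • (1 : R)) := by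
        rw [mul_sum]
        refine sum_congr rfl fun j hj => ?_
        obtain ⟨d, rfl⟩ := Nat.exists_eq_add_of_le (Nat.lt_succ_iff.mp (mem_range.mp hj))
        have hd : (-1 : R) ^ d * (-1) ^ d = 1 := by rw [← mul_pow]; simp
        simp only [Nat.add_sub_cancel_left, zsmul_eq_mul, nsmul_one, zero_add, Int.cast_mul,
          Int.cast_pow, Int.cast_neg, Int.cast_one, Int.cast_natCast, pow_add]
        linear_combination -((-1) ^ j * ((j + d).choose j : R) * Q.eval (j : R)) * hd
    _ = 0 := by rw [h, Pi.zero_apply, mul_zero]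

theorem Real.Gamma_add_nat_eq_mul_eval_ascPochhammer {x : ℝ} (hx : ∀ i : ℕ, x + i ≠ 0) (k : ℕ) :
    Gamma (x + k) = Gamma x * (ascPochhammer ℝ k).eval x := by
  induction k with
  | zero => simp
  | succ k ih =>
    rw [Nat.cast_succ, ← add_assoc, Real.Gamma_add_one (hx k), ih, ascPochhammer_succ_eval]
    ring

section LaguerreWeight

variable {α : ℝ}

theorem rpow_mul_exp_neg_mul_pow_eq {ρ : ℝ} (hρ : 0 < ρ) (N : ℕ) :
    ρ ^ α * exp (-ρ) * ρ ^ N = exp (-ρ) * ρ ^ ((α + N + 1) - 1) := by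
  rw [add_sub_cancel_right, Real.rpow_add hρ, Real.rpow_natCast]
  ring

theorem integrableOn_rpow_mul_exp_neg_mul_pow (hα : -1 < α) (N : ℕ) :
    IntegrableOn (fun ρ : ℝ => ρ ^ α * exp (-ρ) * ρ ^ N) (Ioi 0) := by
  have hs : 0 < α + N + 1 := by linarith [(N.cast_nonneg : (0 : ℝ) ≤ N)]
  exact (Real.GammaIntegral_convergent hs).congr_fun
    (fun _ hρ => (rpow_mul_exp_neg_mul_pow_eq hρ N).symm) measurableSet_Ioi

theorem integral_rpow_mul_exp_neg_mul_pow (hα : -1 < α) (N : ℕ) :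
    ∫ ρ in Ioi (0 : ℝ), ρ ^ α * exp (-ρ) * ρ ^ N = Gamma (α + N + 1) := by
  rw [Real.Gamma_eq_integral (by linarith [(N.cast_nonneg : (0 : ℝ) ≤ N)])]
  exact setIntegral_congr_fun measurableSet_Ioi fun _ hρ => rpow_mul_exp_neg_mul_pow_eq hρ N

theorem integrableOn_rpow_mul_exp_neg_mul_eval (hα : -1 < α) (P : ℝ[X]) :
    IntegrableOn (fun ρ : ℝ => ρ ^ α * exp (-ρ) * P.eval ρ) (Ioi 0) := by
  simp_rw [eval_eq_sum_range, mul_sum]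
  exact integrable_finsetSum _ fun i _ =>
    ((integrableOn_rpow_mul_exp_neg_mul_pow hα i).const_mul (P.coeff i)).congr
      (Filter.Eventually.of_forall fun ρ => by ring)

theorem integrableOn_resolvent_mul_rpow_mul_exp_neg_mul_eval (hα : -1 < α) {y : ℝ} (hy : 0 ≤ y)
    (P : ℝ[X]) :
    IntegrableOn (fun ρ : ℝ => (1 + y * ρ)⁻¹ * ρ ^ α * exp (-ρ) * P.eval ρ) (Ioi 0) := by
  have bound : ∀ ρ ∈ Ioi (0 : ℝ), ‖(1 + y * ρ)⁻¹‖ ≤ 1 := fun ρ hρ => by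
    have : 1 ≤ 1 + y * ρ := le_add_of_nonneg_right (mul_nonneg hy (le_of_lt hρ))
    rw [norm_inv, Real.norm_of_nonneg (by linarith)]
    exact inv_le_one_of_one_le₀ this
  have := (integrableOn_rpow_mul_exp_neg_mul_eval hα P).bdd_mul (f := fun ρ : ℝ => (1 + y * ρ)⁻¹)
    (by fun_prop) (ae_restrict_of_forall_mem measurableSet_Ioi bound)
  simpa only [IntegrableOn, mul_assoc] using this

end LaguerreWeight

section GenLaguerre

open Nat

noncomputable def genLaguerreCoeff (α : ℝ) (n j : ℕ) : ℝ :=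
  (-1) ^ j * (Gamma (α + n + 1) / (Gamma (α + j + 1) * (n - j)!)) / j !

noncomputable def genLaguerrePoly (α : ℝ) (n : ℕ) : ℝ[X] :=
  ∑ j ∈ range (n + 1), C (genLaguerreCoeff α n j) * X ^ j

theorem genLaguerre_eq_sum (α : ℝ) (n : ℕ) (x : ℝ) :
    genLaguerre α n x = ∑ j ∈ range (n + 1), genLaguerreCoeff α n j * x ^ j :=
  sum_congr rfl fun j _ => by rw [genLaguerreCoeff]; ring

theorem eval_genLaguerrePoly (α : ℝ) (n : ℕ) (x : ℝ) :
    (genLaguerrePoly α n).eval x = genLaguerre α n x := by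
  simp [genLaguerrePoly, eval_finsetSum, genLaguerre_eq_sum]

theorem natDegree_genLaguerrePoly_le (α : ℝ) (n : ℕ) : (genLaguerrePoly α n).natDegree ≤ n :=
  natDegree_sum_le_of_forall_le _ _ fun j hj =>
    (natDegree_C_mul_X_pow_le _ j).trans (Nat.lt_succ_iff.mp (mem_range.mp hj))

theorem genLaguerre_zero {α : ℝ} (hα : -1 < α) (x : ℝ) : genLaguerre α 0 x = 1 := by
  simp [genLaguerre, (Real.Gamma_pos_of_pos (by linarith : 0 < α + 1)).ne']

theorem genLaguerreCoeff_mul_Gamma {α : ℝ} (hα : -1 < α) {m j : ℕ} (hj : j ≤ m) (k : ℕ) :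
    genLaguerreCoeff α m j * Gamma (α + ↑(k + j) + 1) = Gamma (α + m + 1) / m ! *
      ((-1) ^ j * m.choose j * ((ascPochhammer ℝ k).comp (X + C (α + 1))).eval (j : ℝ)) := by
  have hpos : ∀ i : ℕ, 0 < α + j + 1 + i := fun i => by
    linarith [(j.cast_nonneg : (0 : ℝ) ≤ j), (i.cast_nonneg : (0 : ℝ) ≤ i)]
  have hshift : α + ↑(k + j) + 1 = α + j + 1 + k := by push_cast; ring
  rw [hshift, Real.Gamma_add_nat_eq_mul_eval_ascPochhammer (fun i => (hpos i).ne'),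
    Nat.cast_choose ℝ hj, eval_comp]
  have hΓ : Gamma (α + j + 1) ≠ 0 := (Real.Gamma_pos_of_pos (by simpa using hpos 0)).ne'
  simp only [genLaguerreCoeff, eval_add, eval_X, eval_C]
  field_simp
  ring_nf

theorem integral_rpow_mul_exp_neg_mul_pow_mul_genLaguerre {α : ℝ} (hα : -1 < α) {k m : ℕ}
    (hk : k < m) : ∫ ρ in Ioi (0 : ℝ), ρ ^ α * exp (-ρ) * ρ ^ k * genLaguerre α m ρ = 0 := by
  have expand : ∀ ρ : ℝ, ρ ^ α * exp (-ρ) * ρ ^ k * genLaguerre α m ρ =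
      ∑ j ∈ range (m + 1), genLaguerreCoeff α m j * (ρ ^ α * exp (-ρ) * ρ ^ (k + j)) :=
    fun ρ => by rw [genLaguerre_eq_sum, mul_sum]; exact sum_congr rfl fun j _ => by ring
  have hdeg : ((ascPochhammer ℝ k).comp (X + C (α + 1))).natDegree < m := by
    rwa [natDegree_comp, ascPochhammer_natDegree, natDegree_X_add_C, mul_one]
  simp_rw [expand]
  rw [integral_finsetSum _ fun j _ => (integrableOn_rpow_mul_exp_neg_mul_pow hα _).const_mul _]
  simp_rw [integral_const_mul, integral_rpow_mul_exp_neg_mul_pow hα]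
  rw [sum_congr rfl fun j hj =>
      genLaguerreCoeff_mul_Gamma hα (Nat.lt_succ_iff.mp (mem_range.mp hj)) k,
    ← mul_sum, sum_range_neg_one_pow_mul_choose_mul_eval_eq_zero hdeg, mul_zero]

end GenLaguerre

section Resolvent

variable {α y : ℝ} {m : ℕ}

theorem integrableOn_resolvent_mul_genLaguerre_mul_pow (hα : -1 < α) (hy : 0 ≤ y) (j : ℕ) :
    IntegrableOn
      (fun ρ : ℝ => (1 + y * ρ)⁻¹ * ρ ^ α * exp (-ρ) * genLaguerre α m ρ * ρ ^ j) (Ioi 0) := by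
  have := integrableOn_resolvent_mul_rpow_mul_exp_neg_mul_eval hα hy (genLaguerrePoly α m * X ^ j)
  simpa only [eval_mul, eval_pow, eval_X, eval_genLaguerrePoly, mul_assoc] using this

theorem integral_resolvent_mul_genLaguerre_mul_pow_succ (hα : -1 < α) (hy : 0 < y) {j : ℕ}
    (hj : j < m) :
    ∫ ρ in Ioi (0 : ℝ), (1 + y * ρ)⁻¹ * ρ ^ α * exp (-ρ) * genLaguerre α m ρ * ρ ^ (j + 1) =
      -1 / y * ∫ ρ in Ioi (0 : ℝ),
        (1 + y * ρ)⁻¹ * ρ ^ α * exp (-ρ) * genLaguerre α m ρ * ρ ^ j := by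
  have split : ∀ ρ ∈ Ioi (0 : ℝ),
      (1 + y * ρ)⁻¹ * ρ ^ α * exp (-ρ) * genLaguerre α m ρ * ρ ^ (j + 1) =
        y⁻¹ * (ρ ^ α * exp (-ρ) * ρ ^ j * genLaguerre α m ρ) -
          y⁻¹ * ((1 + y * ρ)⁻¹ * ρ ^ α * exp (-ρ) * genLaguerre α m ρ * ρ ^ j) := fun ρ hρ => by
    have : 1 + y * ρ ≠ 0 := by have : (0 : ℝ) < ρ := hρ; positivity
    field_simp
    ring
  have orth_integrable : IntegrableOn
      (fun ρ : ℝ => ρ ^ α * exp (-ρ) * ρ ^ j * genLaguerre α m ρ) (Ioi 0) := by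
    have := integrableOn_rpow_mul_exp_neg_mul_eval hα (X ^ j * genLaguerrePoly α m)
    simpa only [eval_mul, eval_pow, eval_X, eval_genLaguerrePoly, mul_assoc] using this
  rw [setIntegral_congr_fun measurableSet_Ioi split,
    integral_sub (orth_integrable.const_mul _)
      ((integrableOn_resolvent_mul_genLaguerre_mul_pow hα hy.le j).const_mul _),
    integral_const_mul, integral_const_mul,
    integral_rpow_mul_exp_neg_mul_pow_mul_genLaguerre hα hj]
  ring

theorem integral_resolvent_mul_genLaguerre_mul_pow (hα : -1 < α) (hy : 0 < y) {j : ℕ}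
    (hj : j ≤ m) :
    ∫ ρ in Ioi (0 : ℝ), (1 + y * ρ)⁻¹ * ρ ^ α * exp (-ρ) * genLaguerre α m ρ * ρ ^ j =
      (-1 / y) ^ j * ∫ ρ in Ioi (0 : ℝ), (1 + y * ρ)⁻¹ * ρ ^ α * exp (-ρ) * genLaguerre α m ρ := by
  induction j with
  | zero => simp
  | succ j ih =>
    rw [integral_resolvent_mul_genLaguerre_mul_pow_succ hα hy hj, ih (by omega), pow_succ]
    ring

theorem integral_resolvent_mul_genLaguerre_mul_eval (hα : -1 < α) (hy : 0 < y) {P : ℝ[X]}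
    (hP : P.natDegree ≤ m) :
    ∫ ρ in Ioi (0 : ℝ), (1 + y * ρ)⁻¹ * ρ ^ α * exp (-ρ) * genLaguerre α m ρ * P.eval ρ =
      P.eval (-1 / y) *
        ∫ ρ in Ioi (0 : ℝ), (1 + y * ρ)⁻¹ * ρ ^ α * exp (-ρ) * genLaguerre α m ρ := by
  have hPm : P.natDegree < m + 1 := Nat.lt_succ_of_le hP
  have expand : ∀ ρ : ℝ,
      (1 + y * ρ)⁻¹ * ρ ^ α * exp (-ρ) * genLaguerre α m ρ * P.eval ρ = ∑ i ∈ range (m + 1),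
        P.coeff i * ((1 + y * ρ)⁻¹ * ρ ^ α * exp (-ρ) * genLaguerre α m ρ * ρ ^ i) :=
    fun ρ => by rw [eval_eq_sum_range' hPm, mul_sum]; exact sum_congr rfl fun i _ => by ring
  simp_rw [expand]
  rw [integral_finsetSum _ fun i _ =>
      (integrableOn_resolvent_mul_genLaguerre_mul_pow hα hy.le i).const_mul _,
    eval_eq_sum_range' hPm, sum_mul]
  refine sum_congr rfl fun i hi => ?_
  rw [integral_const_mul, integral_resolvent_mul_genLaguerre_mul_pow hα hy
    (Nat.lt_succ_iff.mp (mem_range.mp hi)), mul_assoc]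

theorem Imn_eq_genLaguerre_mul (hα : -1 < α) (hy : 0 < y) (β : ℝ) {n : ℕ} (hnm : n ≤ m) :
    Imn α β y m n = genLaguerre β n (-1 / y) *
      ∫ ρ in Ioi (0 : ℝ), (1 + y * ρ)⁻¹ * ρ ^ α * exp (-ρ) * genLaguerre α m ρ := by
  simpa only [Imn, eval_genLaguerrePoly] using
    integral_resolvent_mul_genLaguerre_mul_eval hα hy ((natDegree_genLaguerrePoly_le β n).trans hnm)

end Resolvent

theorem Imn_factorize (α y : ℝ) (hα : -1 < α) (hy : 0 < y) (m n : ℕ) (hnm : n ≤ m) :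
    Imn α α y m n = genLaguerre α n (-1 / y) * Imn α α y m 0 := by
  rw [Imn_eq_genLaguerre_mul hα hy α hnm, Imn_eq_genLaguerre_mul hα hy α (Nat.zero_le m),
    genLaguerre_zero hα, one_mul]
end

section
/- For real α > -1, y > 0, and natural number n: ∫_0^∞ (1+yρ)^{-1} ρ^α e^{-ρ} L_n^{(α)}(ρ) dρ = Γ(n+α+1) · (1/y) · U(n+1, 1-α, 1/y), where U is Kummer's confluent hypergeometric function of the second kind. -/
open MeasureTheory Real Set

/-- Tricomi confluent hypergeometric function via its integral representation,
valid for Re a > 0, z > 0. -/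
noncomputable def KummerU (a b z : ℝ) : ℝ :=
  (Real.Gamma a)⁻¹ * ∫ t in Ioi (0 : ℝ), Real.exp (-z * t) * t ^ (a - 1) * (1 + t) ^ (b - a - 1)

open scoped Nat

/-! Since `(1 + yρ)⁻¹ = y⁻¹ ∫₀^∞ e^{-t/y} e^{-tρ} dt`, Fubini turns the integral into
`y⁻¹ ∫₀^∞ e^{-t/y} F(1 + t) dt`, where `F` is the Laplace transform of `ρ^α L_n^{(α)}(ρ)`.
Integrating the Laguerre sum termwise against Gamma integrals and resumming with the binomial
theorem gives `F(s) = Γ(α+n+1)/n! · (s-1)^n s^{-(α+n+1)}`, and then the remaining `t`-integral is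
the one defining `U(n+1, 1-α, 1/y)`. -/

lemma integral_exp_neg_mul_Ioi_zero {b : ℝ} (hb : 0 < b) :
    ∫ t in Ioi (0 : ℝ), exp (-b * t) = b⁻¹ := by
  rw [integral_exp_mul_Ioi (neg_neg_of_pos hb), mul_zero, exp_zero, div_neg, neg_div, neg_neg,
    one_div]

lemma setIntegral_inv_add_mul_eq_integral_exp {f : ℝ → ℝ} (hf : IntegrableOn f (Ioi 0))
    {c : ℝ} (hc : 0 < c) :
    ∫ ρ in Ioi (0 : ℝ), (c + ρ)⁻¹ * f ρ =
      ∫ t in Ioi (0 : ℝ), exp (-c * t) * ∫ ρ in Ioi (0 : ℝ), exp (-t * ρ) * f ρ := by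
  set F : ℝ → ℝ → ℝ := fun ρ t ↦ exp (-c * t) * (exp (-t * ρ) * f ρ)
  have hF : Integrable (Function.uncurry F)
      ((volume.restrict (Ioi 0)).prod (volume.restrict (Ioi 0))) := by
    have hmeas : AEStronglyMeasurable (Function.uncurry F)
        ((volume.restrict (Ioi 0)).prod (volume.restrict (Ioi 0))) :=
      ((by fun_prop : Continuous fun z : ℝ × ℝ ↦ exp (-c * z.2) * exp (-z.2 * z.1))
        |>.aestronglyMeasurable.mul hf.aestronglyMeasurable.comp_fst).congr
        (.of_forall fun z ↦ by simp only [F, Function.uncurry, Pi.mul_apply, mul_assoc])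
    refine (hf.norm.mul_prod (exp_neg_integrableOn_Ioi 0 hc)).mono' hmeas ?_
    rw [Measure.prod_restrict]
    filter_upwards [ae_restrict_mem (measurableSet_Ioi.prod measurableSet_Ioi)]
      with ⟨ρ, t⟩ ⟨hρ, ht⟩
    have hdecay : exp (-t * ρ) ≤ 1 := exp_le_one_iff.2 <| by nlinarith [mem_Ioi.1 hρ, mem_Ioi.1 ht]
    simp only [F, Function.uncurry, norm_mul, norm_of_nonneg (exp_pos _).le]
    calc exp (-c * t) * (exp (-t * ρ) * ‖f ρ‖) ≤ exp (-c * t) * (1 * ‖f ρ‖) := by gcongr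
      _ = ‖f ρ‖ * exp (-c * t) := by ring
  calc ∫ ρ in Ioi (0 : ℝ), (c + ρ)⁻¹ * f ρ = ∫ ρ in Ioi (0 : ℝ), ∫ t in Ioi (0 : ℝ), F ρ t := by
        refine setIntegral_congr_fun measurableSet_Ioi fun ρ hρ ↦ ?_
        have hcρ : 0 < c + ρ := add_pos hc hρ
        rw [← integral_exp_neg_mul_Ioi_zero hcρ, ← integral_mul_const]
        refine integral_congr_ae (.of_forall fun t ↦ ?_)
        simp only [F, ← mul_assoc, ← exp_add]
        ring_nf
    _ = ∫ t in Ioi (0 : ℝ), ∫ ρ in Ioi (0 : ℝ), F ρ t := integral_integral_swap hF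
    _ = _ := by simp only [F, integral_const_mul]

lemma rpow_mul_genLaguerre (α : ℝ) (n : ℕ) {ρ : ℝ} (hρ : 0 < ρ) :
    ρ ^ α * genLaguerre α n ρ = ∑ j ∈ Finset.range (n + 1),
      (-1) ^ j * Gamma (α + n + 1) / (Gamma (α + j + 1) * (n - j)! * j !) * ρ ^ (α + j) := by
  rw [genLaguerre, Finset.mul_sum]
  refine Finset.sum_congr rfl fun j _ ↦ ?_
  rw [rpow_add hρ, rpow_natCast]
  ring

lemma integral_rpow_mul_exp_neg_mul {q b : ℝ} (hq : -1 < q) (hb : 0 < b) :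
    ∫ x in Ioi (0 : ℝ), x ^ q * exp (-b * x) = Gamma (q + 1) * b ^ (-(q + 1)) := by
  simpa only [rpow_one, div_one, mul_one, one_mul, mul_comm, neg_div] using
    integral_rpow_mul_exp_neg_mul_rpow one_pos hq hb

lemma integrableOn_rpow_mul_exp_neg_mul {q b : ℝ} (hq : -1 < q) (hb : 0 < b) :
    IntegrableOn (fun x ↦ x ^ q * exp (-b * x)) (Ioi 0) := by
  simpa only [rpow_one] using integrableOn_rpow_mul_exp_neg_mul_rpow hq one_pos hb

section Laplace

variable {α s : ℝ} (n : ℕ)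

lemma rpow_mul_exp_neg_mul_genLaguerre_eq_sum {ρ : ℝ} (hρ : 0 < ρ) :
    ρ ^ α * exp (-s * ρ) * genLaguerre α n ρ = ∑ j ∈ Finset.range (n + 1),
      (-1) ^ j * Gamma (α + n + 1) / (Gamma (α + j + 1) * (n - j)! * j !) *
        (ρ ^ (α + j) * exp (-s * ρ)) := by
  rw [mul_right_comm, rpow_mul_genLaguerre α n hρ, Finset.sum_mul]
  simp only [mul_assoc]

lemma integrableOn_rpow_mul_exp_neg_mul_genLaguerre (hα : -1 < α) (hs : 0 < s) :
    IntegrableOn (fun ρ ↦ ρ ^ α * exp (-s * ρ) * genLaguerre α n ρ) (Ioi 0) := by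
  refine IntegrableOn.congr_fun ?_
    (fun ρ hρ ↦ (rpow_mul_exp_neg_mul_genLaguerre_eq_sum n hρ).symm) measurableSet_Ioi
  refine integrable_finsetSum _ fun j _ ↦ (integrableOn_rpow_mul_exp_neg_mul ?_ hs).const_mul _
  linarith [j.cast_nonneg (α := ℝ)]

lemma integral_rpow_mul_exp_neg_mul_genLaguerre (hα : -1 < α) (hs : 0 < s) :
    ∫ ρ in Ioi (0 : ℝ), ρ ^ α * exp (-s * ρ) * genLaguerre α n ρ =
      Gamma (α + n + 1) / n ! * (s - 1) ^ n * s ^ (-(α + n + 1)) := by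
  have hαj (j : ℕ) : -1 < α + j := by linarith [j.cast_nonneg (α := ℝ)]
  have hterm (j : ℕ) (hj : j ∈ Finset.range (n + 1)) :
      (-1) ^ j * Gamma (α + n + 1) / (Gamma (α + j + 1) * (n - j)! * j !) *
          (Gamma (α + j + 1) * s ^ (-(α + j + 1))) =
        Gamma (α + n + 1) / n ! * s ^ (-(α + 1)) * ((-s⁻¹) ^ j * 1 ^ (n - j) * n.choose j) := by
    have hΓ : Gamma (α + j + 1) ≠ 0 := (Gamma_pos_of_pos (by linarith [hαj j])).ne'
    have hjn : j ≤ n := Finset.mem_range_succ_iff.1 hj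
    have hchoose : (n.choose j : ℝ) * j ! * (n - j)! = n ! := by
      exact_mod_cast n.choose_mul_factorial_mul_factorial hjn
    have hchoose_ne : (n.choose j : ℝ) ≠ 0 := Nat.cast_ne_zero.2 (Nat.choose_pos hjn).ne'
    rw [show -(α + j + 1) = -(α + 1) + -(j : ℝ) by ring, rpow_add hs, rpow_neg hs.le (j : ℝ),
      rpow_natCast, ← hchoose, neg_pow s⁻¹, inv_pow]
    field_simp
    ring
  rw [setIntegral_congr_fun measurableSet_Ioi
      fun ρ hρ ↦ rpow_mul_exp_neg_mul_genLaguerre_eq_sum n hρ,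
    integral_finsetSum _ fun j _ ↦ (integrableOn_rpow_mul_exp_neg_mul (hαj j) hs).const_mul _]
  simp only [integral_const_mul, integral_rpow_mul_exp_neg_mul (hαj _) hs]
  rw [Finset.sum_congr rfl hterm, ← Finset.mul_sum, ← add_pow,
    show -(α + n + 1) = -(α + 1) + -(n : ℝ) by ring, rpow_add hs, rpow_neg hs.le (n : ℝ),
    rpow_natCast, show -s⁻¹ + 1 = (s - 1) * s⁻¹ by field_simp; ring, mul_pow, inv_pow]
  ring

end Laplace

lemma kummerU_natCast_add_one (n : ℕ) (b z : ℝ) :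
    KummerU (n + 1) b z =
      (n ! : ℝ)⁻¹ * ∫ t in Ioi (0 : ℝ), exp (-z * t) * t ^ n * (1 + t) ^ (b - n - 2) := by
  rw [KummerU, Gamma_nat_eq_factorial, add_sub_cancel_right, sub_add_eq_sub_sub,
    sub_sub _ (1 : ℝ), one_add_one_eq_two]
  simp only [rpow_natCast]

theorem I0n_eq_kummerU (α y : ℝ) (hα : -1 < α) (hy : 0 < y) (n : ℕ) :
    (∫ ρ in Ioi (0 : ℝ), (1 + y * ρ)⁻¹ * ρ ^ α * Real.exp (-ρ) * genLaguerre α n ρ) =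
      Real.Gamma (n + α + 1) * (1 / y) * KummerU (n + 1) (1 - α) (1 / y) := by
  have hf : IntegrableOn (fun ρ ↦ ρ ^ α * exp (-ρ) * genLaguerre α n ρ) (Ioi 0) := by
    simpa only [neg_mul, one_mul] using integrableOn_rpow_mul_exp_neg_mul_genLaguerre n hα one_pos
  calc _ = y⁻¹ * ∫ ρ in Ioi (0 : ℝ), (y⁻¹ + ρ)⁻¹ * (ρ ^ α * exp (-ρ) * genLaguerre α n ρ) := by
        rw [← integral_const_mul]
        refine setIntegral_congr_fun measurableSet_Ioi fun ρ (hρ : 0 < ρ) ↦ ?_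
        have : 0 < 1 + y * ρ := by positivity
        field_simp
    _ = y⁻¹ * ∫ t in Ioi (0 : ℝ), Gamma (α + n + 1) / n ! *
          (exp (-y⁻¹ * t) * t ^ n * (1 + t) ^ (-(α + n + 1))) := by
        rw [setIntegral_inv_add_mul_eq_integral_exp hf (inv_pos.2 hy)]
        refine congrArg _ (setIntegral_congr_fun measurableSet_Ioi fun t (ht : 0 < t) ↦ ?_)
        have hshift (ρ : ℝ) : exp (-t * ρ) * (ρ ^ α * exp (-ρ) * genLaguerre α n ρ) =
            ρ ^ α * exp (-(1 + t) * ρ) * genLaguerre α n ρ := by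
          simp only [neg_mul, add_mul, one_mul, neg_add, exp_add]
          ring
        have hs : 0 < 1 + t := by positivity
        simp only [hshift, integral_rpow_mul_exp_neg_mul_genLaguerre n hα hs, add_sub_cancel_left]
        ring
    _ = _ := by
        rw [integral_const_mul, kummerU_natCast_add_one, one_div,
          show (1 - α) - n - 2 = -(α + n + 1) by ring, show (n : ℝ) + α + 1 = α + n + 1 by ring]
        ring
end
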